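/- arXiv:1507.04784 — 2 statements merged into one kernel-verified Lean document; each statement's English description precedes it below -/
import Mathlib

section
/- An isomorphism between two finite trees is uniquely determined by the induced bijection between their leaf sets. In particular, if two tree isomorphisms f, g : T → S induce the same map on leaves, then f = g. -/
open SimpleGraph

section Aux
variable {V W : Type*}

/-- A graph isomorphism preserves distances. -/
lemma aux_iso_dist_eq {T : SimpleGraph V} {S : SimpleGraph W} (e : T ≃g S)
    (hT : T.Connected) (u v : V) : S.dist (e u) (e v) = T.dist u v := by
  have hS : S.Connected := SimpleGraph.Connected.map e.toHom e.toEquiv.surjective hT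
  refine le_antisymm ?_ ?_
  · obtain ⟨p, hp⟩ := hT.exists_walk_length_eq_dist u v
    calc S.dist (e u) (e v) ≤ (p.map e.toHom).length := SimpleGraph.dist_le _
      _ = p.length := SimpleGraph.Walk.length_map e.toHom p
      _ = T.dist u v := hp
  · obtain ⟨p, hp⟩ := hS.exists_walk_length_eq_dist (e u) (e v)
    have h1 : T.dist (e.symm (e u)) (e.symm (e v)) ≤ p.length := by
      calc T.dist (e.symm (e u)) (e.symm (e v)) ≤ (p.map e.symm.toHom).length :=
            SimpleGraph.dist_le _
        _ = p.length := SimpleGraph.Walk.length_map e.symm.toHom p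
    simpa [hp] using h1

/-- In a tree, every path realizes the distance. -/
lemma aux_tree_path_length [DecidableEq V] {T : SimpleGraph V} (hT : T.IsTree) {u v : V}
    (p : T.Walk u v) (hp : p.IsPath) : p.length = T.dist u v := by
  obtain ⟨q, hq⟩ := hT.isConnected.exists_walk_length_eq_dist u v
  have hbp : q.bypass.IsPath := q.bypass_isPath
  have hlen : q.bypass.length = T.dist u v :=
    le_antisymm (hq ▸ q.length_bypass_le) (SimpleGraph.dist_le _)
  obtain ⟨r, -, hr⟩ := hT.existsUnique_path u v
  rw [hr p hp, ← hr q.bypass hbp]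
  exact hlen

/-- A graph isomorphism preserves degrees. -/
lemma aux_iso_degree_eq [Fintype V] [Fintype W] [DecidableEq V] [DecidableEq W]
    {T : SimpleGraph V} {S : SimpleGraph W} [DecidableRel T.Adj] [DecidableRel S.Adj]
    (e : T ≃g S) (v : V) : S.degree (e v) = T.degree v := by
  rw [← SimpleGraph.card_neighborSet_eq_degree, ← SimpleGraph.card_neighborSet_eq_degree]
  exact (Fintype.card_congr (e.mapNeighborSet v)).symm

/-- Key lemma: in a finite tree, two distinct vertices are separated by
the distance to some leaf. -/
lemma aux_tree_exists_leaf_dist_ne [Fintype W] [DecidableEq W]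
    {S : SimpleGraph W} [DecidableRel S.Adj] (hS : S.IsTree) {u v : W} (huv : u ≠ v) :
    ∃ l : W, S.degree l = 1 ∧ S.dist u l ≠ S.dist v l := by
  classical
  have hconn := hS.isConnected
  set A : Finset W := Finset.univ.filter (fun w => S.dist u w = S.dist u v + S.dist v w) with hA
  have hvA : v ∈ A := by simp [hA]
  obtain ⟨l, hlA, hlmax⟩ := A.exists_max_image (fun w => S.dist u w) ⟨v, hvA⟩
  have hl : S.dist u l = S.dist u v + S.dist v l := by
    simpa [hA] using hlA
  have huvpos : 0 < S.dist u v := hconn.pos_dist_of_ne huv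
  have hul : u ≠ l := by
    intro h; subst h
    simp only [SimpleGraph.dist_self] at hl
    omega
  refine ⟨l, ?_, by omega⟩
  obtain ⟨p, hp, hpu⟩ := hS.existsUnique_path u l
  have hrev : p.reverse.IsPath := hp.reverse
  cases hpr : p.reverse with
  | nil => exact absurd rfl hul
  | @cons _ w0 _ hadj0 r =>
    have hkey : ∀ w, S.Adj l w → w = w0 := by
      intro w hw
      obtain ⟨q, hq, hqu⟩ := hS.existsUnique_path u w
      have hqlen : q.length = S.dist u w := aux_tree_path_length hS q hq
      by_cases hls : l ∈ q.support
      · -- then dist u w = dist u l + 1, contradicting maximality of l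
        exfalso
        have htake : (q.takeUntil l hls).IsPath := hq.takeUntil hls
        have hdrop : (q.dropUntil l hls).IsPath := hq.dropUntil hls
        have hspec := q.take_spec hls
        obtain ⟨s, -, hsu⟩ := hS.existsUnique_path l w
        have h1 : (q.dropUntil l hls) = SimpleGraph.Walk.cons hw SimpleGraph.Walk.nil := by
          rw [hsu (q.dropUntil l hls) hdrop, hsu (SimpleGraph.Walk.cons hw SimpleGraph.Walk.nil) (by simp only [SimpleGraph.Walk.cons_isPath_iff]; exact ⟨SimpleGraph.Walk.IsPath.nil, by simpa using hw.ne⟩)]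
        have h2 : (q.takeUntil l hls) = p := hpu (q.takeUntil l hls) htake
        have hplen : p.length = S.dist u l := aux_tree_path_length hS p hp
        have hqlen' : q.length = p.length + 1 := by
          conv_lhs => rw [← hspec]
          rw [SimpleGraph.Walk.length_append, h1, h2]
          simp
        have hdw : S.dist u w = S.dist u l + 1 := by omega
        have hlw1 : S.dist l w = 1 := SimpleGraph.dist_eq_one_iff_adj.mpr hw
        have hvw : S.dist v w ≤ S.dist v l + 1 := by
          have := hconn.dist_triangle (u := v) (v := l) (w := w)
          omega
        have hwA : w ∈ A := by
          have htri : S.dist u w ≤ S.dist u v + S.dist v w := hconn.dist_triangle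
          simp only [hA, Finset.mem_filter, Finset.mem_univ, true_and]
          omega
        have := hlmax w hwA
        omega
      · -- then q extended by the edge w-l is the path p, so w is the
        -- penultimate vertex of p, i.e. w = w0
        have hlq : l ∉ q.reverse.support := by
          rwa [SimpleGraph.Walk.support_reverse, List.mem_reverse]
        have hcons : (SimpleGraph.Walk.cons hw q.reverse).IsPath := by
          rw [SimpleGraph.Walk.cons_isPath_iff]
          exact ⟨hq.reverse, hlq⟩
        have hcpath : (q.concat hw.symm).IsPath := by
          have := hcons.reverse
          rwa [SimpleGraph.Walk.reverse_cons, SimpleGraph.Walk.reverse_reverse] at this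
        have h2 : q.concat hw.symm = p := hpu (q.concat hw.symm) hcpath
        have h3 : SimpleGraph.Walk.cons hw q.reverse = p.reverse := by
          rw [← h2, SimpleGraph.Walk.reverse_concat]
        rw [hpr] at h3
        have hsup := congrArg SimpleGraph.Walk.support h3
        rw [SimpleGraph.Walk.support_cons, SimpleGraph.Walk.support_cons,
          q.reverse.support_eq_cons, r.support_eq_cons] at hsup
        simp only [List.cons.injEq] at hsup
        exact hsup.2.1
    have hw0 : w0 ∈ S.neighborFinset l := by
      rw [SimpleGraph.mem_neighborFinset]
      exact hadj0
    have : S.neighborFinset l = {w0} := by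
      ext w
      simp only [SimpleGraph.mem_neighborFinset, Finset.mem_singleton]
      constructor
      · exact hkey w
      · rintro rfl; exact hadj0
    rw [← SimpleGraph.card_neighborFinset_eq_degree, this, Finset.card_singleton]

end Aux

/-- an isomorphism between finite trees is determined by the induced map
on leaves (vertices of degree one): if two isomorphisms f, g : T ≃ S agree on all
leaves of T, then f = g. Following the context, T is assumed to have no degree-2
vertices. -/
theorem stmt_0 {V W : Type*} [Fintype V] [Fintype W] [DecidableEq V] [DecidableEq W]
    (T : SimpleGraph V) (S : SimpleGraph W) [DecidableRel T.Adj] [DecidableRel S.Adj]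
    (hT : T.IsTree) (hS : S.IsTree)
    (hdeg : ∀ v : V, T.degree v ≠ 2)
    (f g : T ≃g S)
    (h : ∀ v : V, T.degree v = 1 → f v = g v) :
    f = g := by
  have hTc := hT.isConnected
  have hmain : ∀ v : V, f v = g v := by
    intro v
    by_contra hne
    obtain ⟨l', hl'deg, hl'dist⟩ := aux_tree_exists_leaf_dist_ne hS hne
    set l : V := f.symm l' with hldef
    have hfl : f l = l' := f.apply_symm_apply l'
    have hTl : T.degree l = 1 := by
      have := aux_iso_degree_eq f l
      rw [hfl] at this
      omega
    have hgl : g l = l' := by rw [← hfl]; exact (h l hTl).symm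
    apply hl'dist
    calc S.dist (f v) l' = S.dist (f v) (f l) := by rw [hfl]
      _ = T.dist v l := aux_iso_dist_eq f hTc v l
      _ = S.dist (g v) (g l) := (aux_iso_dist_eq g hTc v l).symm
      _ = S.dist (g v) l' := by rw [hgl]
  exact RelIso.ext hmain
end

section
/- Let Y = ({T, S}, φ) be an unordered tanglegram, with leaves of T and S identified with {1,...,n} so A(T), A(S) ≤ S_n and φ ∈ S_n. There exists an automorphism of Y switching the two trees if and only if T and S are isomorphic and φ·A(T)·φ ∩ A(T) ≠ ∅ (as subsets of S_n, after identifying A(S) with A(T) via a tree isomorphism). -/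
/-- Given trees T, S with leaves marked by `Fin n`, the set of permutations of the
leaf markers induced by graph isomorphisms T → S. For T = S (same markings) this is
the leaf automorphism group A(T). -/
def leafIso {VT VS : Type*} [Fintype VT] [Fintype VS] [DecidableEq VT] [DecidableEq VS]
    (T : SimpleGraph VT) (S : SimpleGraph VS) [DecidableRel T.Adj] [DecidableRel S.Adj]
    {n : ℕ} (mT : Fin n ≃ {v : VT // T.degree v = 1})
    (mS : Fin n ≃ {v : VS // S.degree v = 1}) : Set (Equiv.Perm (Fin n)) :=
  {π | ∃ e : VT ≃ VS, (∀ u v, S.Adj (e u) (e v) ↔ T.Adj u v) ∧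
    ∀ i, e (mT i) = (mS (π i) : VS)}

/-! Leaf permutations induced by tree isomorphisms form a groupoid: they contain the identity
and are closed under inverses and composition. Both directions are then identities in `S_n`:
given a tree swap `(g₁, g₂)` take `ψ = g₁` and `a = 1`, since `(g₁⁻¹ φ)² = g₁⁻¹ g₂⁻¹`;
conversely take `g₂ = a ψ⁻¹` and `g₁ = φ g₂ φ = ψ · (ψ⁻¹ φ) a (ψ⁻¹ φ)`. -/

section LeafIso

variable {VT VS VR : Type*} [Fintype VT] [Fintype VS] [Fintype VR]
  [DecidableEq VT] [DecidableEq VS] [DecidableEq VR]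
  {T : SimpleGraph VT} {S : SimpleGraph VS} {R : SimpleGraph VR}
  [DecidableRel T.Adj] [DecidableRel S.Adj] [DecidableRel R.Adj] {n : ℕ}
  {mT : Fin n ≃ {v : VT // T.degree v = 1}} {mS : Fin n ≃ {v : VS // S.degree v = 1}}
  {mR : Fin n ≃ {v : VR // R.degree v = 1}}

theorem one_mem_leafIso : (1 : Equiv.Perm (Fin n)) ∈ leafIso T T mT mT :=
  ⟨Equiv.refl VT, fun _ _ => Iff.rfl, fun _ => rfl⟩

theorem inv_mem_leafIso {π : Equiv.Perm (Fin n)} (h : π ∈ leafIso T S mT mS) :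
    π⁻¹ ∈ leafIso S T mS mT := by
  obtain ⟨e, he_adj, he_leaf⟩ := h
  refine ⟨e.symm, fun u v => ?_, fun i => ?_⟩
  · simpa using (he_adj (e.symm u) (e.symm v)).symm
  · rw [e.symm_apply_eq, he_leaf, Equiv.Perm.coe_inv, Equiv.apply_symm_apply]

theorem mul_mem_leafIso {σ τ : Equiv.Perm (Fin n)} (hσ : σ ∈ leafIso S R mS mR)
    (hτ : τ ∈ leafIso T S mT mS) : σ * τ ∈ leafIso T R mT mR := by
  obtain ⟨f, hf_adj, hf_leaf⟩ := hσ
  obtain ⟨e, he_adj, he_leaf⟩ := hτ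
  refine ⟨e.trans f, fun u v => (hf_adj (e u) (e v)).trans (he_adj u v), fun i => ?_⟩
  simp only [Equiv.trans_apply, he_leaf, hf_leaf, Equiv.Perm.mul_apply]

end LeafIso

theorem stmt_13_general {VT VS : Type*} [Fintype VT] [Fintype VS] [DecidableEq VT]
    [DecidableEq VS] (T : SimpleGraph VT) (S : SimpleGraph VS)
    [DecidableRel T.Adj] [DecidableRel S.Adj]
    {n : ℕ}
    (mT : Fin n ≃ {v : VT // T.degree v = 1}) (mS : Fin n ≃ {v : VS // S.degree v = 1})
    (φ : Equiv.Perm (Fin n)) :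
    (∃ g₁ g₂ : Equiv.Perm (Fin n), g₁ ∈ leafIso T S mT mS ∧ g₂ ∈ leafIso S T mS mT ∧
        g₁ = φ * g₂ * φ) ↔
      (∃ ψ ∈ leafIso T S mT mS, ∃ a ∈ leafIso T T mT mT,
        (ψ⁻¹ * φ) * a * (ψ⁻¹ * φ) ∈ leafIso T T mT mT) := by
  constructor
  · rintro ⟨g₁, g₂, hg₁, hg₂, hswap⟩
    refine ⟨g₁, hg₁, 1, one_mem_leafIso, ?_⟩
    have square : (g₁⁻¹ * φ) * 1 * (g₁⁻¹ * φ) = g₁⁻¹ * g₂⁻¹ := by subst hswap; group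
    rw [square]
    exact mul_mem_leafIso (inv_mem_leafIso hg₁) (inv_mem_leafIso hg₂)
  · rintro ⟨ψ, hψ, a, ha, hconj⟩
    refine ⟨ψ * ((ψ⁻¹ * φ) * a * (ψ⁻¹ * φ)), a * ψ⁻¹, mul_mem_leafIso hψ hconj,
      mul_mem_leafIso ha (inv_mem_leafIso hψ), by group⟩

/-- an unordered tanglegram Y = ({T,S}, φ) admits an automorphism
switching the two trees — i.e. a pair of isomorphisms g₁ : T → S, g₂ : S → T with
g₁ = φ ∘ g₂ ∘ φ on the leaf markers — if and only if T and S are isomorphic (via some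
isomorphism ψ) and, after identifying A(S) with A(T) via ψ (which turns φ into
ψ⁻¹ ∘ φ), we have φ·A(T)·φ ∩ A(T) ≠ ∅. -/
theorem stmt_13 {VT VS : Type*} [Fintype VT] [Fintype VS] [DecidableEq VT]
    [DecidableEq VS] (T : SimpleGraph VT) (S : SimpleGraph VS)
    [DecidableRel T.Adj] [DecidableRel S.Adj]
    (hT : T.IsTree) (hS : S.IsTree) {n : ℕ}
    (mT : Fin n ≃ {v : VT // T.degree v = 1}) (mS : Fin n ≃ {v : VS // S.degree v = 1})
    (φ : Equiv.Perm (Fin n)) :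
    (∃ g₁ g₂ : Equiv.Perm (Fin n), g₁ ∈ leafIso T S mT mS ∧ g₂ ∈ leafIso S T mS mT ∧
        g₁ = φ * g₂ * φ) ↔
      (∃ ψ ∈ leafIso T S mT mS, ∃ a ∈ leafIso T T mT mT,
        (ψ⁻¹ * φ) * a * (ψ⁻¹ * φ) ∈ leafIso T T mT mT) :=
  stmt_13_general T S mT mS φ
end
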